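/- arXiv:quant-ph/0310128 — 3 statements merged into one kernel-verified Lean document; each statement's English description precedes it below -/
import Mathlib

section
/- The probability density P_N(p) integrates to 1: ∫_{-∞}^{+∞} P_N(p) dp = 1. -/
set_option maxHeartbeats 1000000

open Real MeasureTheory Set Filter Topology Function

-- sin²(θ + kπ) = sin²θ
lemma aux_sin_sq_add_int_mul_pi (θ : ℝ) (k : ℤ) : sin (θ + k * π) ^ 2 = sin θ ^ 2 := by
  rw [Real.sin_add, Real.sin_int_mul_pi, mul_zero, add_zero, mul_pow]
  have h : Real.cos (k * π) ^ 2 = 1 := by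
    have := Real.sin_sq_add_cos_sq (k * π)
    rw [Real.sin_int_mul_pi] at this
    nlinarith
  rw [h, mul_one]

-- integrability of sin²x/x²
lemma aux_gsq_integrable : Integrable (fun x : ℝ => sin x ^ 2 / x ^ 2) := by
  refine Integrable.mono' ((integrable_inv_one_add_sq).const_mul 2) ?_ ?_
  · exact ((Real.continuous_sin.pow 2).measurable.div (measurable_id.pow_const 2)).aestronglyMeasurable
  · refine Eventually.of_forall fun x => ?_
    have h1 : sin x ^ 2 ≤ x ^ 2 := Real.sin_sq_le_sq
    have h2 : sin x ^ 2 ≤ 1 := Real.sin_sq_le_one x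
    have h0 : (0:ℝ) ≤ sin x ^ 2 / x ^ 2 := by positivity
    rw [Real.norm_eq_abs, abs_of_nonneg h0]
    rcases eq_or_ne x 0 with rfl | hx
    · simp
    · rw [div_le_iff₀ (by positivity)]
      have hx2 : (0:ℝ) < x ^ 2 := by positivity
      have : 2 * (1 + x ^ 2)⁻¹ * x ^ 2 = 2 * x ^ 2 / (1 + x ^ 2) := by ring
      rw [this, le_div_iff₀ (by positivity)]
      nlinarith

-- A1 : for x > 0, IntegrableOn t e^{-xt} Ioi 0 and integral = 1/x²
lemma aux_A1_deriv {x : ℝ} (hx : 0 < x) (t : ℝ) :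
    HasDerivAt (fun t : ℝ => -(t / x) * Real.exp (-(x * t)) - (1 / x ^ 2) * Real.exp (-(x * t)))
      (t * Real.exp (-(x * t))) t := by
  have he : HasDerivAt (fun t : ℝ => Real.exp (-(x * t))) (Real.exp (-(x * t)) * -x) t := by
    have : HasDerivAt (fun t : ℝ => -(x * t)) (-x) t := by
      exact ((hasDerivAt_id t).const_mul x).neg.congr_deriv (by simp)
    exact (Real.hasDerivAt_exp _).comp t this
  have h1 : HasDerivAt (fun t : ℝ => -(t / x) * Real.exp (-(x * t)))
      (-(1 / x) * Real.exp (-(x * t)) + -(t / x) * (Real.exp (-(x * t)) * -x)) t := by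
    exact (((hasDerivAt_id t).div_const x).neg).mul he
  have h2 : HasDerivAt (fun t : ℝ => (1 / x ^ 2) * Real.exp (-(x * t)))
      ((1 / x ^ 2) * (Real.exp (-(x * t)) * -x)) t := he.const_mul _
  have := h1.sub h2
  refine this.congr_deriv ?_
  field_simp
  ring

lemma aux_A1_tendsto {x : ℝ} (hx : 0 < x) :
    Tendsto (fun t : ℝ => -(t / x) * Real.exp (-(x * t)) - (1 / x ^ 2) * Real.exp (-(x * t)))
      atTop (𝓝 0) := by
  have hxt : Tendsto (fun t : ℝ => x * t) atTop atTop :=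
    Tendsto.const_mul_atTop hx tendsto_id
  have h1 : Tendsto (fun t : ℝ => t * Real.exp (-t)) atTop (𝓝 0) := by
    simpa using Real.tendsto_pow_mul_exp_neg_atTop_nhds_zero 1
  have h2 : Tendsto (fun t : ℝ => (x * t) * Real.exp (-(x * t))) atTop (𝓝 0) := h1.comp hxt
  have h3 : Tendsto (fun t : ℝ => Real.exp (-(x * t))) atTop (𝓝 0) :=
    (Real.tendsto_exp_neg_atTop_nhds_zero).comp hxt
  have := ((h2.const_mul (-(1 / x ^ 2))).sub (h3.const_mul (1 / x ^ 2)))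
  have heq : (fun t : ℝ => (-(1 / x ^ 2)) * ((x * t) * Real.exp (-(x * t))) -
      (1 / x ^ 2) * Real.exp (-(x * t))) =
      (fun t : ℝ => -(t / x) * Real.exp (-(x * t)) - (1 / x ^ 2) * Real.exp (-(x * t))) := by
    funext t
    field_simp
  rw [heq] at this
  simpa using this

lemma aux_A1_integrable {x : ℝ} (hx : 0 < x) :
    IntegrableOn (fun t : ℝ => t * Real.exp (-(x * t))) (Ioi 0) := by
  refine integrableOn_Ioi_deriv_of_nonneg' (fun t _ => aux_A1_deriv hx t)
    (fun t ht => ?_) (aux_A1_tendsto hx)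
  have : (0:ℝ) < t := ht
  positivity

lemma aux_A1_integral {x : ℝ} (hx : 0 < x) :
    ∫ t in Ioi (0:ℝ), t * Real.exp (-(x * t)) = 1 / x ^ 2 := by
  rw [integral_Ioi_of_hasDerivAt_of_tendsto' (fun t _ => aux_A1_deriv hx t)
    (aux_A1_integrable hx) (aux_A1_tendsto hx)]
  simp

noncomputable def H (t x : ℝ) : ℝ :=
  Real.exp (-(x * t)) *
    (-(1/2) + t ^ 2 / (2 * (t ^ 2 + 4)) * Real.cos (2 * x) - t / (t ^ 2 + 4) * Real.sin (2 * x))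

lemma aux_A2_deriv {t : ℝ} (ht : 0 < t) (x : ℝ) :
    HasDerivAt (H t) (Real.sin x ^ 2 * (t * Real.exp (-(x * t)))) x := by
  have ht4 : t ^ 2 + 4 ≠ 0 := by positivity
  have he : HasDerivAt (fun x : ℝ => Real.exp (-(x * t))) (Real.exp (-(x * t)) * -t) x := by
    have : HasDerivAt (fun x : ℝ => -(x * t)) (-t) x := by
      exact ((hasDerivAt_id x).mul_const t).neg.congr_deriv (by simp)
    exact (Real.hasDerivAt_exp _).comp x this
  have hc : HasDerivAt (fun x : ℝ => Real.cos (2 * x)) (-Real.sin (2 * x) * 2) x := by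
    have h2 : HasDerivAt (fun x : ℝ => 2 * x) 2 x := by simpa using (hasDerivAt_id x).const_mul 2
    exact (Real.hasDerivAt_cos _).comp x h2
  have hs : HasDerivAt (fun x : ℝ => Real.sin (2 * x)) (Real.cos (2 * x) * 2) x := by
    have h2 : HasDerivAt (fun x : ℝ => 2 * x) 2 x := by simpa using (hasDerivAt_id x).const_mul 2
    exact (Real.hasDerivAt_sin _).comp x h2
  have hP : HasDerivAt (fun x : ℝ =>
      -(1/2) + t ^ 2 / (2 * (t ^ 2 + 4)) * Real.cos (2 * x) - t / (t ^ 2 + 4) * Real.sin (2 * x))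
      (t ^ 2 / (2 * (t ^ 2 + 4)) * (-Real.sin (2 * x) * 2) - t / (t ^ 2 + 4) * (Real.cos (2 * x) * 2)) x := by
    have := ((hasDerivAt_const x (-(1/2 : ℝ))).add (hc.const_mul (t ^ 2 / (2 * (t ^ 2 + 4))))).sub (hs.const_mul (t / (t ^ 2 + 4)))
    exact this.congr_deriv (by ring)
  have := he.mul hP
  refine this.congr_deriv ?_
  rw [Real.sin_sq_eq_half_sub]
  field_simp
  ring

lemma aux_A2_tendsto {t : ℝ} (ht : 0 < t) : Tendsto (H t) atTop (𝓝 0) := by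
  have hxt : Tendsto (fun x : ℝ => x * t) atTop atTop :=
    Tendsto.atTop_mul_const ht tendsto_id
  have h3 : Tendsto (fun x : ℝ => Real.exp (-(x * t))) atTop (𝓝 0) :=
    Real.tendsto_exp_neg_atTop_nhds_zero.comp hxt
  have hC : ∀ x : ℝ, ‖H t x‖ ≤ (1/2 + t ^ 2 / (2 * (t ^ 2 + 4)) + t / (t ^ 2 + 4)) * Real.exp (-(x * t)) := by
    intro x
    have he : 0 < Real.exp (-(x * t)) := Real.exp_pos _
    rw [H, Real.norm_eq_abs, abs_mul, abs_of_pos he, mul_comm]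
    gcongr (?_) * _
    have h1 : |Real.cos (2*x)| ≤ 1 := Real.abs_cos_le_one _
    have h2 : |Real.sin (2*x)| ≤ 1 := Real.abs_sin_le_one _
    have hb : (0:ℝ) ≤ t ^ 2 / (2 * (t ^ 2 + 4)) := by positivity
    have hb2 : (0:ℝ) ≤ t / (t ^ 2 + 4) := by positivity
    calc |(-(1/2) + t ^ 2 / (2 * (t ^ 2 + 4)) * Real.cos (2 * x) - t / (t ^ 2 + 4) * Real.sin (2 * x))|
        ≤ |(-(1/2) + t ^ 2 / (2 * (t ^ 2 + 4)) * Real.cos (2 * x))| + |t / (t ^ 2 + 4) * Real.sin (2 * x)| := abs_sub _ _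
      _ ≤ (|(-(1/2 : ℝ))| + |t ^ 2 / (2 * (t ^ 2 + 4)) * Real.cos (2 * x)|) + |t / (t ^ 2 + 4) * Real.sin (2 * x)| := by
          gcongr; exact abs_add_le _ _
      _ ≤ (1/2 + t ^ 2 / (2 * (t ^ 2 + 4))) + t / (t ^ 2 + 4) := by
          rw [abs_mul, abs_mul, abs_of_nonneg hb, abs_of_nonneg hb2]
          have : |(-(1/2 : ℝ))| = 1/2 := by norm_num
          rw [this]
          nlinarith [abs_nonneg (Real.cos (2*x)), abs_nonneg (Real.sin (2*x))]
      _ = 1/2 + t ^ 2 / (2 * (t ^ 2 + 4)) + t / (t ^ 2 + 4) := by ring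
  have := (h3.const_mul (1/2 + t ^ 2 / (2 * (t ^ 2 + 4)) + t / (t ^ 2 + 4)))
  rw [mul_zero] at this
  exact squeeze_zero_norm hC this

lemma aux_A2_integrable {t : ℝ} (ht : 0 < t) :
    IntegrableOn (fun x : ℝ => Real.sin x ^ 2 * (t * Real.exp (-(x * t)))) (Ioi 0) := by
  refine integrableOn_Ioi_deriv_of_nonneg' (fun x _ => aux_A2_deriv ht x)
    (fun x _ => ?_) (aux_A2_tendsto ht)
  positivity

lemma aux_A2_integral {t : ℝ} (ht : 0 < t) :
    ∫ x in Ioi (0:ℝ), Real.sin x ^ 2 * (t * Real.exp (-(x * t))) = 2 / (t ^ 2 + 4) := by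
  rw [integral_Ioi_of_hasDerivAt_of_tendsto' (fun x _ => aux_A2_deriv ht x)
    (aux_A2_integrable ht) (aux_A2_tendsto ht)]
  have ht4 : t ^ 2 + 4 ≠ 0 := by positivity
  simp [H]
  field_simp
  ring

lemma aux_A3 : ∫ t in Ioi (0:ℝ), 2 / (t ^ 2 + 4) = π / 2 := by
  have hderiv : ∀ t : ℝ, HasDerivAt (fun t : ℝ => Real.arctan (t / 2)) (2 / (t ^ 2 + 4)) t := by
    intro t
    have h2 : HasDerivAt (fun t : ℝ => t / 2) (1/2) t := by
      simpa using (hasDerivAt_id t).div_const 2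
    have := (Real.hasDerivAt_arctan (t / 2)).comp t h2
    refine this.congr_deriv ?_
    field_simp
    ring
  have htend : Tendsto (fun t : ℝ => Real.arctan (t / 2)) atTop (𝓝 (π / 2)) := by
    have : Tendsto (fun t : ℝ => t / 2) atTop atTop := tendsto_id.atTop_div_const (by norm_num)
    exact (Real.tendsto_arctan_atTop.mono_right nhdsWithin_le_nhds).comp this
  rw [integral_Ioi_of_hasDerivAt_of_tendsto' (fun t _ => hderiv t)
    (integrableOn_Ioi_deriv_of_nonneg' (fun t _ => hderiv t) (fun t _ => by positivity) htend) htend]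
  simp

noncomputable def ff (x t : ℝ) : ℝ := Real.sin x ^ 2 * (t * Real.exp (-(x * t)))

lemma aux_half : ∫ x in Ioi (0:ℝ), sin x ^ 2 / x ^ 2 = π / 2 := by
  have haex : ∀ᵐ x ∂(volume.restrict (Ioi (0:ℝ))), 0 < x := by
    rw [ae_restrict_iff' measurableSet_Ioi]
    exact Eventually.of_forall fun x hx => hx
  have hinner : ∀ x : ℝ, 0 < x →
      ∫ t in Ioi (0:ℝ), ff x t = Real.sin x ^ 2 / x ^ 2 := by
    intro x hx
    unfold ff
    rw [MeasureTheory.integral_const_mul, aux_A1_integral hx, mul_one_div]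
  have hint : Integrable (uncurry ff)
      ((volume.restrict (Ioi (0:ℝ))).prod (volume.restrict (Ioi (0:ℝ)))) := by
    have hmeas : AEStronglyMeasurable (uncurry ff)
        ((volume.restrict (Ioi (0:ℝ))).prod (volume.restrict (Ioi (0:ℝ)))) := by
      apply Continuous.aestronglyMeasurable
      unfold uncurry ff
      exact ((Real.continuous_sin.comp continuous_fst).pow 2).mul
        (continuous_snd.mul ((continuous_fst.mul continuous_snd).neg.rexp))
    rw [integrable_prod_iff hmeas]
    constructor
    · filter_upwards [haex] with x hx
      have := (aux_A1_integrable hx).const_mul (Real.sin x ^ 2)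
      simpa [uncurry, ff] using this
    · apply Integrable.congr (aux_gsq_integrable.restrict (s := Ioi 0))
      filter_upwards [haex] with x hx
      have h1 : ∀ᵐ t ∂(volume.restrict (Ioi (0:ℝ))), ‖ff x t‖ = ff x t := by
        rw [ae_restrict_iff' measurableSet_Ioi]
        refine Eventually.of_forall fun t ht => ?_
        have h0 : 0 ≤ ff x t := by
          unfold ff
          have : (0:ℝ) ≤ t := le_of_lt ht
          positivity
        rw [Real.norm_eq_abs, abs_of_nonneg h0]
      have h2 : ∫ y in Ioi (0:ℝ), ‖uncurry ff (x, y)‖ = ∫ t in Ioi (0:ℝ), ff x t :=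
        integral_congr_ae h1
      rw [h2, hinner x hx]
  have hswap := integral_integral_swap hint
  have hL : ∫ x in Ioi (0:ℝ), ∫ t in Ioi (0:ℝ), ff x t = ∫ x in Ioi (0:ℝ), sin x ^ 2 / x ^ 2 := by
    apply integral_congr_ae
    filter_upwards [haex] with x hx
    exact hinner x hx
  have hR : ∫ t in Ioi (0:ℝ), ∫ x in Ioi (0:ℝ), ff x t = π / 2 := by
    rw [← aux_A3]
    apply integral_congr_ae
    filter_upwards [haex] with t ht
    exact aux_A2_integral ht
  rw [← hL, hswap, hR]

lemma aux_J : ∫ x : ℝ, sin x ^ 2 / x ^ 2 = π := by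
  have heven : ∀ x : ℝ, sin (-x) ^ 2 / (-x) ^ 2 = sin x ^ 2 / x ^ 2 := by
    intro x; rw [Real.sin_neg, neg_sq, neg_sq]
  have h1 : ∫ x in Iic (0:ℝ), sin x ^ 2 / x ^ 2 = π / 2 := by
    have := integral_comp_neg_Ioi (c := (0:ℝ)) (f := fun x => sin x ^ 2 / x ^ 2)
    rw [neg_zero] at this
    rw [← this, ← aux_half]
    exact integral_congr_ae (Eventually.of_forall fun x => heven x)
  rw [← intervalIntegral.integral_Iic_add_Ioi (aux_gsq_integrable.integrableOn)
    (aux_gsq_integrable.integrableOn), h1, aux_half]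
  ring

-- the odd function O w = sin²w / w
lemma aux_O_bound (w : ℝ) : ‖sin w ^ 2 / w‖ ≤ |w| := by
  rcases eq_or_ne w 0 with rfl | hw
  · simp
  · rw [Real.norm_eq_abs, abs_div]
    rw [div_le_iff₀ (abs_pos.mpr hw)]
    have h1 : sin w ^ 2 ≤ w ^ 2 := Real.sin_sq_le_sq
    have : |sin w ^ 2| = sin w ^ 2 := abs_of_nonneg (sq_nonneg _)
    rw [this]
    calc sin w ^ 2 ≤ w ^ 2 := h1
      _ = |w| * |w| := by rw [← abs_mul, abs_of_nonneg (mul_self_nonneg w)]; ring_nf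
  
lemma aux_O_continuous : Continuous (fun w : ℝ => sin w ^ 2 / w) := by
  rw [continuous_iff_continuousAt]
  intro x
  rcases eq_or_ne x 0 with rfl | hx
  · have h0 : (fun w : ℝ => sin w ^ 2 / w) 0 = 0 := by simp
    unfold ContinuousAt
    rw [h0]
    apply squeeze_zero_norm aux_O_bound
    simpa using (continuous_abs.tendsto (0:ℝ))
  · exact ((Real.continuous_sin.pow 2).continuousAt).div continuousAt_id hx

lemma aux_O_odd_cancel (R : ℝ) : ∫ w in (-R)..R, sin w ^ 2 / w = 0 := by
  have hInt : ∀ a b : ℝ, IntervalIntegrable (fun w : ℝ => sin w ^ 2 / w) volume a b :=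
    fun a b => aux_O_continuous.intervalIntegrable a b
  have hneg := intervalIntegral.integral_comp_neg (a := (0:ℝ)) (b := R)
    (fun w : ℝ => sin w ^ 2 / w)
  have hodd : (fun w : ℝ => sin (-w) ^ 2 / (-w)) = (fun w : ℝ => -(sin w ^ 2 / w)) := by
    funext w; rw [Real.sin_neg, neg_sq, div_neg]
  rw [hodd] at hneg
  rw [intervalIntegral.integral_neg] at hneg
  rw [← intervalIntegral.integral_add_adjacent_intervals (hInt (-R) 0) (hInt 0 R)]
  rw [neg_zero] at hneg
  rw [← hneg]
  ring

-- cross identity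
lemma aux_cross_id (c : ℝ) (hc : c ≠ 0) (hsc : Real.sin c = 0) (w : ℝ) :
    sin w ^ 2 / (w * (w + c)) = (1 / c) * (sin w ^ 2 / w - sin w ^ 2 / (w + c)) := by
  rcases eq_or_ne w 0 with rfl | hw
  · simp
  rcases eq_or_ne (w + c) 0 with h0 | hwc
  · have hw' : w = -c := by linarith
    have : Real.sin w ^ 2 = 0 := by rw [hw', Real.sin_neg, hsc]; ring
    rw [this, h0]
    simp
  · field_simp
    ring

lemma aux_cross_zero {N : ℕ} (hN : 0 < N) :
    ∫ w : ℝ, sin w ^ 2 / (w * (w + N * π)) = 0 := by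
  set c : ℝ := N * π with hc
  have hcpos : 0 < c := by
    rw [hc]; positivity
  have hsc : Real.sin c = 0 := by
    rw [hc]
    have := Real.sin_int_mul_pi (N : ℤ)
    simpa using this
  -- integrability of g3
  have hg2eq : ∀ w : ℝ, sin (w + c) ^ 2 = sin w ^ 2 := by
    intro w
    have := aux_sin_sq_add_int_mul_pi w (N : ℤ)
    rw [hc]
    simpa using this
  have hg2 : Integrable (fun w : ℝ => sin w ^ 2 / (w + c) ^ 2) := by
    have := aux_gsq_integrable.comp_add_right c
    apply this.congr
    refine Eventually.of_forall fun w => ?_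
    simp only
    rw [hg2eq w]
  have hg3 : Integrable (fun w : ℝ => sin w ^ 2 / (w * (w + c))) := by
    apply Integrable.mono' ((aux_gsq_integrable.add hg2).div_const 2)
    · apply Measurable.aestronglyMeasurable
      exact (Real.continuous_sin.pow 2).measurable.div
        (measurable_id.mul (measurable_id.add_const c))
    · refine Eventually.of_forall fun w => ?_
      have hab : sin w ^ 2 / (w * (w + c)) = (sin w / w) * (sin w / (w + c)) := by
        rw [div_mul_div_comm]; ring_nf
      rw [hab, Real.norm_eq_abs, abs_mul]
      have h2ab := two_mul_le_add_sq (|sin w / w|) (|sin w / (w + c)|)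
      have e1 : |sin w / w| ^ 2 = sin w ^ 2 / w ^ 2 := by
        rw [sq_abs, div_pow]
      have e2 : |sin w / (w + c)| ^ 2 = sin w ^ 2 / (w + c) ^ 2 := by
        rw [sq_abs, div_pow]
      simp only [Pi.add_apply]
      nlinarith [abs_nonneg (sin w / w), abs_nonneg (sin w / (w + c))]
  -- limit of symmetric interval integrals
  have hlim := MeasureTheory.intervalIntegral_tendsto_integral hg3
    tendsto_neg_atTop_atBot tendsto_id
  -- identify interval integrals
  have hO : ∀ a b : ℝ, IntervalIntegrable (fun w : ℝ => sin w ^ 2 / w) volume a b :=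
    fun a b => aux_O_continuous.intervalIntegrable a b
  have hOc : ∀ a b : ℝ, IntervalIntegrable (fun w : ℝ => sin w ^ 2 / (w + c)) volume a b := by
    intro a b
    have : Continuous (fun w : ℝ => sin (w + c) ^ 2 / (w + c)) :=
      aux_O_continuous.comp (continuous_id.add continuous_const)
    have heq : (fun w : ℝ => sin (w + c) ^ 2 / (w + c)) = (fun w : ℝ => sin w ^ 2 / (w + c)) := by
      funext w; rw [hg2eq w]
    rw [heq] at this
    exact this.intervalIntegrable a b
  have hkey : ∀ R : ℝ, ∫ w in (-R)..R, sin w ^ 2 / (w * (w + c))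
      = -(1 / c) * ∫ v in (R - c)..(R + c), sin v ^ 2 / v := by
    intro R
    have h1 : ∫ w in (-R)..R, sin w ^ 2 / (w * (w + c))
        = (1 / c) * ((∫ w in (-R)..R, sin w ^ 2 / w) - ∫ w in (-R)..R, sin w ^ 2 / (w + c)) := by
      rw [← intervalIntegral.integral_sub (hO _ _) (hOc _ _),
        ← intervalIntegral.integral_const_mul]
      apply intervalIntegral.integral_congr
      intro w _
      exact aux_cross_id c (ne_of_gt hcpos) hsc w
    rw [h1, aux_O_odd_cancel R, zero_sub]
    have h2 : ∫ w in (-R)..R, sin w ^ 2 / (w + c) = ∫ v in (-R + c)..(R + c), sin v ^ 2 / v := by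
      have := intervalIntegral.integral_comp_add_right (a := -R) (b := R)
        (fun v : ℝ => sin v ^ 2 / v) c
      rw [← this]
      apply intervalIntegral.integral_congr
      intro w _
      simp only
      rw [hg2eq w]
    rw [h2]
    have h3 : ∫ v in (-R + c)..(R + c), sin v ^ 2 / v
        = (∫ v in (-(R - c))..(R - c), sin v ^ 2 / v) + ∫ v in (R - c)..(R + c), sin v ^ 2 / v := by
      rw [intervalIntegral.integral_add_adjacent_intervals (hO (-(R-c)) (R - c)) (hO (R - c) (R + c))]
      congr 1
      ring
    rw [h3, aux_O_odd_cancel (R - c)]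
    ring
  -- the RHS tends to 0
  have hbound : ∀ᶠ R in atTop, ‖-(1 / c) * ∫ v in (R - c)..(R + c), sin v ^ 2 / v‖ ≤ 2 / (R - c) := by
    filter_upwards [eventually_ge_atTop (c + 1)] with R hR
    have hRc : (1:ℝ) ≤ R - c := by linarith
    have hRc0 : (0:ℝ) < R - c := by linarith
    have hIb : ‖∫ v in (R - c)..(R + c), sin v ^ 2 / v‖ ≤ (1 / (R - c)) * |(R + c) - (R - c)| := by
      apply intervalIntegral.norm_integral_le_of_norm_le_const
      intro v hv
      rw [Set.uIoc_of_le (by linarith : R - c ≤ R + c)] at hv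
      have hv1 : R - c < v := hv.1
      have hv0 : 0 < v := by linarith
      rw [Real.norm_eq_abs, abs_div, abs_of_pos hv0]
      rw [div_le_div_iff₀ hv0 hRc0]
      have : |sin v ^ 2| ≤ 1 := by
        rw [abs_of_nonneg (sq_nonneg _)]; exact Real.sin_sq_le_one v
      nlinarith [abs_nonneg (sin v ^ 2)]
    have habs : |(R + c) - (R - c)| = 2 * c := by
      rw [abs_of_nonneg (by linarith : (0:ℝ) ≤ (R + c) - (R - c))]; ring
    rw [norm_mul]
    calc ‖-(1 / c)‖ * ‖∫ v in (R - c)..(R + c), sin v ^ 2 / v‖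
        ≤ (1 / c) * ((1 / (R - c)) * (2 * c)) := by
          rw [norm_neg, Real.norm_eq_abs, abs_of_pos (by positivity : (0:ℝ) < 1 / c)]
          rw [habs] at hIb
          exact mul_le_mul_of_nonneg_left hIb (by positivity)
      _ = 2 / (R - c) := by field_simp
  have htend0 : Tendsto (fun R : ℝ => 2 / (R - c)) atTop (𝓝 0) := by
    apply Tendsto.div_atTop tendsto_const_nhds
    exact tendsto_atTop_add_const_right atTop (-c) tendsto_id
  have h0 : Tendsto (fun R : ℝ => ∫ w in (-R)..R, sin w ^ 2 / (w * (w + c))) atTop (𝓝 0) := by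
    rw [show (fun R : ℝ => ∫ w in (-R)..R, sin w ^ 2 / (w * (w + c)))
      = (fun R : ℝ => -(1 / c) * ∫ v in (R - c)..(R + c), sin v ^ 2 / v) from funext hkey]
    exact squeeze_zero_norm' hbound htend0
  have hlim' : Tendsto (fun R : ℝ => ∫ w in (-R)..R, sin w ^ 2 / (w * (w + c))) atTop
      (𝓝 (∫ w : ℝ, sin w ^ 2 / (w * (w + c)))) := by
    simpa using hlim
  exact tendsto_nhds_unique hlim' h0

lemma aux_hg2eq {N : ℕ} (w : ℝ) : sin (w + N * π) ^ 2 = sin w ^ 2 := by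
  have := aux_sin_sq_add_int_mul_pi w (N : ℤ)
  simpa using this

lemma aux_hg2_integrable (N : ℕ) : Integrable (fun w : ℝ => sin w ^ 2 / (w + N * π) ^ 2) := by
  have := aux_gsq_integrable.comp_add_right ((N : ℝ) * π)
  apply this.congr
  refine Eventually.of_forall fun w => ?_
  simp only
  rw [aux_hg2eq w]

lemma aux_hg3_integrable (N : ℕ) : Integrable (fun w : ℝ => sin w ^ 2 / (w * (w + N * π))) := by
  apply Integrable.mono' ((aux_gsq_integrable.add (aux_hg2_integrable N)).div_const 2)
  · apply Measurable.aestronglyMeasurable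
    exact (Real.continuous_sin.pow 2).measurable.div
      (measurable_id.mul (measurable_id.add_const _))
  · refine Eventually.of_forall fun w => ?_
    have hab : sin w ^ 2 / (w * (w + N * π)) = (sin w / w) * (sin w / (w + N * π)) := by
      rw [div_mul_div_comm]; ring_nf
    rw [hab, Real.norm_eq_abs, abs_mul]
    have h2ab := two_mul_le_add_sq (|sin w / w|) (|sin w / (w + N * π)|)
    have e1 : |sin w / w| ^ 2 = sin w ^ 2 / w ^ 2 := by rw [sq_abs, div_pow]
    have e2 : |sin w / (w + N * π)| ^ 2 = sin w ^ 2 / (w + N * π) ^ 2 := by rw [sq_abs, div_pow]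
    simp only [Pi.add_apply]
    nlinarith [abs_nonneg (sin w / w), abs_nonneg (sin w / (w + N * π))]

lemma aux_D {N : ℕ} (hN : 0 < N) :
    ∫ w : ℝ, sin w ^ 2 / (w ^ 2 * (w + N * π) ^ 2) = 2 / (N ^ 2 * π) := by
  have hπ := Real.pi_pos
  have hcpos : (0:ℝ) < N * π := by
    have : (0:ℝ) < N := by exact_mod_cast hN
    positivity
  have hsc : Real.sin ((N:ℝ) * π) = 0 := by
    have := Real.sin_int_mul_pi (N : ℤ); simpa using this
  have hid : ∀ w : ℝ, sin w ^ 2 / (w ^ 2 * (w + N * π) ^ 2)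
      = (1 / (N * π) ^ 2) * (sin w ^ 2 / w ^ 2) + (1 / (N * π) ^ 2) * (sin w ^ 2 / (w + N * π) ^ 2)
        - (2 / (N * π) ^ 2) * (sin w ^ 2 / (w * (w + N * π))) := by
    intro w
    rcases eq_or_ne w 0 with rfl | hw
    · simp
    rcases eq_or_ne (w + N * π) 0 with h0 | hwc
    · have hw' : w = -((N:ℝ) * π) := by linarith
      have hs0 : Real.sin w ^ 2 = 0 := by rw [hw', Real.sin_neg, hsc]; ring
      rw [hs0, h0]
      simp
    · field_simp
      ring
  rw [integral_congr_ae (Eventually.of_forall hid)]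
  have h1 : Integrable (fun w : ℝ => (1 / ((N:ℝ) * π) ^ 2) * (sin w ^ 2 / w ^ 2)) :=
    aux_gsq_integrable.const_mul _
  have h2 : Integrable (fun w : ℝ => (1 / ((N:ℝ) * π) ^ 2) * (sin w ^ 2 / (w + N * π) ^ 2)) :=
    (aux_hg2_integrable N).const_mul _
  have h3 : Integrable (fun w : ℝ => (2 / ((N:ℝ) * π) ^ 2) * (sin w ^ 2 / (w * (w + N * π)))) :=
    (aux_hg3_integrable N).const_mul _
  have hsub := MeasureTheory.integral_sub (h1.add h2) h3
  simp only [Pi.add_apply] at hsub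
  rw [hsub]
  rw [MeasureTheory.integral_add h1 h2]
  rw [MeasureTheory.integral_const_mul, MeasureTheory.integral_const_mul,
    MeasureTheory.integral_const_mul]
  have hg2int : ∫ w : ℝ, sin w ^ 2 / (w + N * π) ^ 2 = π := by
    have hshift := MeasureTheory.integral_add_right_eq_self (μ := volume)
      (fun x : ℝ => sin x ^ 2 / x ^ 2) ((N : ℝ) * π)
    have heq : (fun x : ℝ => sin (x + N * π) ^ 2 / (x + N * π) ^ 2)
        = (fun w : ℝ => sin w ^ 2 / (w + N * π) ^ 2) :=
      funext fun w => by rw [aux_hg2eq w]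
    rw [← heq, hshift, aux_J]
  rw [aux_J, hg2int, aux_cross_zero hN]
  have hNR : ((N:ℝ)) ≠ 0 := by
    have : (0:ℝ) < N := by exact_mod_cast hN
    exact ne_of_gt this
  field_simp
  ring


/-- the momentum probability density integrates to 1. -/
theorem momentum_distribution_normalized
    (a ℏ : ℝ) (ha : 0 < a) (hℏ : 0 < ℏ) (N : ℕ) (hN : 0 < N) :
    ∫ p : ℝ,
        4 * Real.pi * a * ℏ ^ 3 * (N : ℝ) ^ 2 /
            (a ^ 2 * p ^ 2 - ℏ ^ 2 * (N : ℝ) ^ 2 * Real.pi ^ 2) ^ 2 *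
          (if Even N then Real.sin (a * p / (2 * ℏ)) ^ 2
           else Real.cos (a * p / (2 * ℏ)) ^ 2)
      = 1 := by
  have hπ := Real.pi_pos
  have ha' : a ≠ 0 := ne_of_gt ha
  have hℏ' : ℏ ≠ 0 := ne_of_gt hℏ
  have hNR : (0:ℝ) < (N:ℝ) := by exact_mod_cast hN
  have hNR' : (N:ℝ) ≠ 0 := ne_of_gt hNR
  set F : ℝ → ℝ := fun p =>
    4 * Real.pi * a * ℏ ^ 3 * (N : ℝ) ^ 2 /
        (a ^ 2 * p ^ 2 - ℏ ^ 2 * (N : ℝ) ^ 2 * Real.pi ^ 2) ^ 2 *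
      Real.sin (a * p / (2 * ℏ) - N * (π / 2)) ^ 2 with hF
  -- unify the trig part
  have htrig : ∀ θ : ℝ, (if Even N then Real.sin θ ^ 2 else Real.cos θ ^ 2)
      = Real.sin (θ - N * (π / 2)) ^ 2 := by
    intro θ
    rcases Nat.even_or_odd N with ⟨k, hk⟩ | ⟨k, hk⟩
    · rw [if_pos ⟨k, hk⟩]
      have harg : θ - N * (π / 2) = θ + ((-(k:ℤ) : ℤ) : ℝ) * π := by
        push_cast [hk]; ring
      rw [harg, aux_sin_sq_add_int_mul_pi θ (-(k:ℤ))]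
    · rw [if_neg (by simp [hk, parity_simps])]
      have harg : θ - N * (π / 2) = (θ - π / 2) + ((-(k:ℤ) : ℤ) : ℝ) * π := by
        push_cast [hk]; ring
      rw [harg, aux_sin_sq_add_int_mul_pi (θ - π / 2) (-(k:ℤ)), Real.sin_sub_pi_div_two]
      ring
  have hFrw : ∫ p : ℝ,
      4 * Real.pi * a * ℏ ^ 3 * (N : ℝ) ^ 2 /
          (a ^ 2 * p ^ 2 - ℏ ^ 2 * (N : ℝ) ^ 2 * Real.pi ^ 2) ^ 2 *
        (if Even N then Real.sin (a * p / (2 * ℏ)) ^ 2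
         else Real.cos (a * p / (2 * ℏ)) ^ 2) = ∫ p : ℝ, F p := by
    apply integral_congr_ae
    refine Eventually.of_forall fun p => ?_
    simp only [htrig, hF]
  rw [hFrw]
  -- substitution p = b * x with b = 2ℏ/a
  set b : ℝ := 2 * ℏ / a with hb
  have hbpos : 0 < b := by positivity
  have hcomp := MeasureTheory.Measure.integral_comp_mul_left F b
  have hshift := MeasureTheory.integral_add_right_eq_self (μ := volume)
    (fun x : ℝ => F (b * x)) ((N:ℝ) * (π / 2))
  -- pointwise identity after substitution
  have hab : a * b = 2 * ℏ := by rw [hb]; field_simp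
  have hpoint : ∀ w : ℝ, F (b * (w + N * (π / 2)))
      = (π * N ^ 2 / 2 / b) * (sin w ^ 2 / (w ^ 2 * (w + N * π) ^ 2)) := by
    intro w
    have harg : a * (b * (w + N * (π / 2))) / (2 * ℏ) - N * (π / 2) = w := by
      rw [show a * (b * (w + N * (π / 2))) = (a * b) * (w + N * (π / 2)) by ring, hab]
      field_simp
      ring
    have hden : a ^ 2 * (b * (w + N * (π / 2))) ^ 2 - ℏ ^ 2 * (N : ℝ) ^ 2 * Real.pi ^ 2
        = 4 * ℏ ^ 2 * (w * (w + N * π)) := by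
      have : a ^ 2 * (b * (w + N * (π / 2))) ^ 2 = (a * b) ^ 2 * (w + N * (π / 2)) ^ 2 := by ring
      rw [this, hab]
      ring
    rw [hF]
    simp only
    rw [harg, hden]
    rcases eq_or_ne (w * (w + N * π)) 0 with h0 | hne
    · rcases mul_eq_zero.mp h0 with hw | hwc
      · rw [hw]
        simp
      · have hw' : w = -((N:ℝ) * π) := by linarith
        have hs0 : Real.sin w ^ 2 = 0 := by
          rw [hw']
          have : Real.sin ((N:ℝ) * π) = 0 := by
            have := Real.sin_int_mul_pi (N : ℤ); simpa using this
          rw [Real.sin_neg, this]; ring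
        rw [h0, hs0]
        simp
    · have hwne : w ≠ 0 := by
        intro h; apply hne; rw [h]; ring
      have hwcne : w + (N:ℝ) * π ≠ 0 := by
        intro h; apply hne; rw [h]; ring
      rw [hb]
      field_simp
      ring
  -- put everything together
  have h5 : ∫ x : ℝ, F (b * x) = (π * N ^ 2 / 2 / b) * (2 / (N ^ 2 * π)) := by
    rw [← hshift]
    rw [integral_congr_ae (Eventually.of_forall hpoint)]
    rw [MeasureTheory.integral_const_mul, aux_D hN]
  have hbinv : |b⁻¹| = b⁻¹ := abs_of_pos (inv_pos.mpr hbpos)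
  rw [hbinv, smul_eq_mul] at hcomp
  have h6 : ∫ p : ℝ, F p = b * ((π * N ^ 2 / 2 / b) * (2 / (N ^ 2 * π))) := by
    rw [← h5, hcomp, ← mul_assoc, mul_inv_cancel₀ (ne_of_gt hbpos), one_mul]
  rw [h6]
  field_simp
end

section
/- For N = 2r even and any σ with sin(σ/2) ≠ 0 (and (σ+2πn)² ≠ 4π²r² for all n), the identity √(2/a)sin(2rπx/a) = -4πir·√(2/a)·e^{-iσ/2}·e^{iσx/a}·sin(σ/2)·Σ_{n=-∞}^{∞} e^{i2πnx/a}/((σ+2πn)² - 4π²r²) holds for all x ∈ (0,a), with the series converging. -/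
open Real Complex

private lemma coeff_alg (aC E u1 u2 P R : ℂ) (ha : aC ≠ 0) (h1 : u1 ≠ 0) (h2 : u2 ≠ 0)
    (hsub : u1 - u2 = 4 * P * R) :
    (1/aC) * (((E - 1)/(Complex.I*u2/aC) - (E - 1)/(Complex.I*u1/aC)) * Complex.I / 2)
      = 2 * P * R * (E - 1) / (u1 * u2) := by
  have hI : Complex.I ≠ 0 := Complex.I_ne_zero
  have kdiv : ∀ u : ℂ, u ≠ 0 → (E - 1)/(Complex.I*u/aC) = ((E-1)*aC) * (-Complex.I)/u := by
    intro u hu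
    rw [div_div_eq_mul_div, div_eq_div_iff (mul_ne_zero hI hu) hu]
    linear_combination ((E-1)*aC*u)*Complex.I_sq
  rw [kdiv u1 h1, kdiv u2 h2]
  field_simp
  linear_combination ((E-1)*(u2-u1))*Complex.I_sq + (E-1)*hsub

private lemma exp_helper (A B C D E F : ℂ) (h1 : A + B + C = E) (h2 : A + B + D = F) :
    Complex.exp A * (Complex.exp B * ((Complex.exp C - Complex.exp D) * Complex.I / 2))
      = (Complex.exp E - Complex.exp F) * Complex.I / 2 := by
  rw [← h1, ← h2, Complex.exp_add, Complex.exp_add, Complex.exp_add, Complex.exp_add]; ring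

set_option maxHeartbeats 1600000 in
/-- σ-momentum expansion of the even stationary state ψ_{2r},
σ ∈ (0,2π), as a convergent series over ℤ. -/
theorem sigma_momentum_expansion_even
    (a : ℝ) (ha : 0 < a) (r : ℕ) (hr : 0 < r) (σ : ℝ)
    (hσ : σ ∈ Set.Ioo 0 (2 * Real.pi))
    (hsin : Real.sin (σ / 2) ≠ 0)
    (hres : ∀ n : ℤ, (σ + 2 * Real.pi * n) ^ 2 ≠ 4 * Real.pi ^ 2 * (r : ℝ) ^ 2)
    (x : ℝ) (hx : x ∈ Set.Ioo 0 a) :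
    Summable (fun n : ℤ =>
      Complex.exp (Complex.I * (2 * Real.pi * n * x / a)) /
        (((σ + 2 * Real.pi * n) ^ 2 - 4 * Real.pi ^ 2 * (r : ℝ) ^ 2 : ℝ) : ℂ)) ∧
    ((Real.sqrt (2 / a) * Real.sin (2 * r * Real.pi * x / a) : ℝ) : ℂ)
      = -4 * Real.pi * Complex.I * r * (Real.sqrt (2 / a) : ℝ) *
          Complex.exp (-Complex.I * (σ / 2)) *
          Complex.exp (Complex.I * (σ * x / a)) * (Real.sin (σ / 2) : ℝ) *
          ∑' n : ℤ,
            Complex.exp (Complex.I * (2 * Real.pi * n * x / a)) /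
              (((σ + 2 * Real.pi * n) ^ 2 - 4 * Real.pi ^ 2 * (r : ℝ) ^ 2 : ℝ) : ℂ) := by
  obtain ⟨hσ0, hσ2⟩ := hσ
  obtain ⟨hx0, hxa⟩ := hx
  have hπ := Real.pi_pos
  have hπ3 : (3:ℝ) ≤ Real.pi := by linarith [Real.pi_gt_three]
  haveI : Fact (0 < a) := ⟨ha⟩
  have haC : (a : ℂ) ≠ 0 := Complex.ofReal_ne_zero.mpr ha.ne'
  set d : ℤ → ℝ := fun n => (σ + 2 * Real.pi * n) ^ 2 - 4 * Real.pi ^ 2 * (r : ℝ) ^ 2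
    with hd_def
  have hd : ∀ n, d n ≠ 0 := fun n => sub_ne_zero.mpr (hres n)
  -- summability of 1/|d n|
  have hdsum : Summable (fun n : ℤ => 1 / |d n|) := by
    have h2 : Summable (fun n : ℤ => 1 / (n:ℝ)^2) := summable_one_div_int_pow.mpr one_lt_two
    refine Summable.of_norm_bounded_eventually h2 ?_
    rw [Filter.eventually_cofinite]
    apply Set.Finite.subset (Set.finite_Icc (-(2*(r:ℤ)+2)) (2*(r:ℤ)+2))
    intro n hn
    simp only [Set.mem_setOf_eq] at hn
    by_contra hc
    apply hn
    simp only [Set.mem_Icc, not_and_or, not_le] at hc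
    have hm : 2*(r:ℤ)+2 ≤ |n| := by
      rcases hc with h | h
      · rw [abs_of_neg (by omega)]; omega
      · rw [abs_of_pos (by omega)]; omega
    have hm' : 2*(r:ℝ)+2 ≤ |(n:ℝ)| := by
      rw [← Int.cast_abs]; exact_mod_cast hm
    have hr1 : (1:ℝ) ≤ (r:ℝ) := by exact_mod_cast hr
    set m := |(n:ℝ)| with hm_def
    have hm0 : (0:ℝ) < m := by linarith
    have h1 : 2*Real.pi*m - σ ≤ |σ + 2*Real.pi*n| := by
      have hh : |2*Real.pi*(n:ℝ)| ≤ |σ + 2*Real.pi*n| + |σ| := by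
        calc |2*Real.pi*(n:ℝ)| = |(σ + 2*Real.pi*n) - σ| := by ring_nf
        _ ≤ _ := abs_sub _ _
      rw [abs_mul, abs_of_pos (by positivity : (0:ℝ) < 2*Real.pi),
        abs_of_pos hσ0] at hh
      linarith
    have h1' : (0:ℝ) ≤ 2*Real.pi*m - σ := by nlinarith
    have h1sq : (2*Real.pi*m - σ)^2 ≤ (σ + 2*Real.pi*n)^2 := by
      rw [← _root_.sq_abs (σ + 2*Real.pi*n)]
      exact pow_le_pow_left₀ h1' h1 2
    have hdn : (n:ℝ)^2 ≤ d n := by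
      have h5 : (0:ℝ) ≤ (2*Real.pi - σ) := by linarith
      have h6 : (0:ℝ) ≤ (4*Real.pi*m - 2*Real.pi - σ) := by nlinarith
      have hP1 : (0:ℝ) ≤ (2*Real.pi - σ) * (4*Real.pi*m - 2*Real.pi - σ) := mul_nonneg h5 h6
      have hP2 : (0:ℝ) ≤ (m - 2 - 2*(r:ℝ)) * (m - 2 + 2*(r:ℝ)) :=
        mul_nonneg (by linarith) (by linarith)
      have hπ9 : (0:ℝ) ≤ Real.pi^2 - 9 := by nlinarith
      have h3m : (0:ℝ) ≤ 3*m^2 - 4*m := by nlinarith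
      have hP3 : (0:ℝ) ≤ m*(26*m - 36) := mul_nonneg hm0.le (by linarith)
      have key : m^2 ≤ (2*Real.pi*m - σ)^2 - 4*Real.pi^2*(r:ℝ)^2 := by
        linarith [hP1, hP2, hP3, mul_nonneg hπ9 hP2, mul_nonneg hπ9 h3m]
      have hnm : (n:ℝ)^2 = m^2 := (_root_.sq_abs _).symm
      rw [hnm]
      simp only [hd_def]
      nlinarith
    have hn2 : (0:ℝ) < (n:ℝ)^2 := by
      rw [← _root_.sq_abs (n:ℝ)]; nlinarith
    have hdpos : (0:ℝ) < d n := lt_of_lt_of_le hn2 hdn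
    have habs2 : |d n| = d n := abs_of_pos hdpos
    rw [Real.norm_eq_abs, habs2, abs_of_pos (by positivity : (0:ℝ) < 1/ d n)]
    exact one_div_le_one_div_of_le hn2 hdn
  -- norm of the series terms
  have habs : ∀ n : ℤ, ‖Complex.exp (Complex.I * (2 * Real.pi * n * x / a)) / ((d n : ℝ) : ℂ)‖
      = 1 / |d n| := by
    intro n
    rw [norm_div,
      show Complex.I * (2 * (Real.pi:ℂ) * (n:ℂ) * (x:ℂ) / (a:ℂ))
        = ((2*Real.pi*(n:ℝ)*x/a : ℝ) : ℂ) * Complex.I by push_cast; ring,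
      Complex.norm_exp_ofReal_mul_I,
      Complex.norm_real, Real.norm_eq_abs]
  have hsumT : Summable (fun n : ℤ =>
      Complex.exp (Complex.I * (2 * Real.pi * n * x / a)) / ((d n : ℝ) : ℂ)) := by
    refine Summable.of_norm ?_
    refine hdsum.congr fun n => ?_
    exact (habs n).symm
  refine ⟨hsumT, ?_⟩
  -- the periodic function
  set g : ℝ → ℂ := fun t => Complex.exp (-Complex.I * (σ * t / a)) *
      ((Real.sin (2 * Real.pi * r * t / a) : ℝ) : ℂ) with hg_def
  have hg_cont : Continuous g := by
    apply Continuous.mul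
    · exact Complex.continuous_exp.comp
        (continuous_const.mul ((continuous_const.mul Complex.continuous_ofReal).div_const _))
    · exact Complex.continuous_ofReal.comp
        (Real.continuous_sin.comp ((continuous_const.mul continuous_id).div_const _))
  have hg_end : g 0 = g a := by
    simp only [hg_def]
    have h2 : 2*Real.pi*(r:ℝ)*a/a = ((2*r : ℕ):ℝ) * Real.pi := by
      push_cast; field_simp
    rw [h2, Real.sin_nat_mul_pi]
    norm_num
  set F : C(AddCircle a, ℂ) :=
    ⟨AddCircle.liftIco a 0 g,
      AddCircle.liftIco_zero_continuous hg_end hg_cont.continuousOn⟩ with hF_def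
  set u₁ : ℤ → ℝ := fun n => 2*Real.pi*r - 2*Real.pi*n - σ with hu1_def
  set u₂ : ℤ → ℝ := fun n => -(2*Real.pi*r) - 2*Real.pi*n - σ with hu2_def
  have hu1 : ∀ n : ℤ, u₁ n ≠ 0 := by
    intro n h
    apply hres n
    simp only [hu1_def] at h
    have h' : σ + 2*Real.pi*n = 2*Real.pi*r := by linarith
    rw [h']; ring
  have hu2 : ∀ n : ℤ, u₂ n ≠ 0 := by
    intro n h
    apply hres n
    simp only [hu2_def] at h
    have h' : σ + 2*Real.pi*n = -(2*Real.pi*r) := by linarith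
    rw [h']; ring
  have hu1C : ∀ n : ℤ, ((u₁ n : ℝ) : ℂ) ≠ 0 := fun n => Complex.ofReal_ne_zero.mpr (hu1 n)
  have hu2C : ∀ n : ℤ, ((u₂ n : ℝ) : ℂ) ≠ 0 := fun n => Complex.ofReal_ne_zero.mpr (hu2 n)
  have hdu : ∀ n : ℤ, ((d n : ℝ):ℂ) = ((u₁ n : ℝ) : ℂ) * ((u₂ n : ℝ) : ℂ) := by
    intro n
    rw [show d n = u₁ n * u₂ n by simp only [hd_def, hu1_def, hu2_def]; ring]
    push_cast; ring
  have key_exp : ∀ (u : ℝ) (k : ℤ), (u = 2*Real.pi*k - σ) →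
      Complex.exp (Complex.I * (u:ℂ) / (a:ℂ) * (a:ℂ)) = Complex.exp (-Complex.I * σ) := by
    intro u k hk
    rw [show Complex.I * (u:ℂ) / (a:ℂ) * (a:ℂ)
        = (k:ℂ) * (2*(Real.pi:ℂ)*Complex.I) + (-Complex.I*(σ:ℂ)) by
      rw [hk]; push_cast; field_simp; ring]
    rw [Complex.exp_add, Complex.exp_int_mul_two_pi_mul_I, one_mul]
  set K : ℂ := 2 * (Real.pi:ℂ) * (r:ℂ) * (Complex.exp (-Complex.I * σ) - 1) with hK_def
  have hcoeff : ∀ n : ℤ, fourierCoeff (⇑F) n = K / ((d n : ℝ) : ℂ) := by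
    intro n
    have hF' : (⇑F) = AddCircle.liftIco a 0 g := rfl
    rw [fourierCoeff_eq_intervalIntegral (⇑F) n 0]
    have heq : Set.EqOn (fun t : ℝ => fourier (-n) (t : AddCircle a) • F ((t:ℝ) : AddCircle a))
        (fun t : ℝ => fourier (-n) (t : AddCircle a) • g t) (Set.uIcc 0 (0 + a)) := by
      intro t ht
      rw [Set.uIcc_of_le (by linarith : (0:ℝ) ≤ 0 + a)] at ht
      simp only
      congr 1
      rcases lt_or_eq_of_le ht.2 with h | h
      · show AddCircle.liftIco a 0 g ((t:ℝ) : AddCircle a) = g t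
        exact AddCircle.liftIco_coe_apply ⟨ht.1, h⟩
      · have ht' : t = a := by rw [h]; exact zero_add a
        rw [ht']
        have e0 : ((a:ℝ) : AddCircle a) = ((0:ℝ) : AddCircle a) := by
          rw [AddCircle.coe_period, QuotientAddGroup.mk_zero]
        show F ((a:ℝ) : AddCircle a) = g a
        show AddCircle.liftIco a 0 g ((a:ℝ) : AddCircle a) = g a
        rw [e0, ← hg_end]
        exact AddCircle.liftIco_coe_apply ⟨le_refl 0, by rw [zero_add]; exact ha⟩
    rw [intervalIntegral.integral_congr heq, zero_add]
    have hint : ∀ t : ℝ, fourier (-n) (t : AddCircle a) • g t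
        = (Complex.exp (Complex.I * ((u₂ n : ℝ):ℂ) / (a:ℂ) * (t:ℂ))
            - Complex.exp (Complex.I * ((u₁ n : ℝ):ℂ) / (a:ℂ) * (t:ℂ))) * Complex.I / 2 := by
      intro t
      rw [fourier_coe_apply, smul_eq_mul]
      simp only [hg_def]
      rw [Complex.ofReal_sin, Complex.sin]
      refine exp_helper _ _ _ _ _ _ ?_ ?_
      · simp only [hu2_def]; push_cast; field_simp; ring
      · simp only [hu1_def]; push_cast; field_simp; ring
    simp only [hint]
    have int1 : IntervalIntegrable
        (fun t : ℝ => Complex.exp (Complex.I * ((u₂ n : ℝ):ℂ) / (a:ℂ) * (t:ℂ)))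
        MeasureTheory.volume 0 a :=
      (Complex.continuous_exp.comp (continuous_const.mul Complex.continuous_ofReal)).intervalIntegrable _ _
    have int2 : IntervalIntegrable
        (fun t : ℝ => Complex.exp (Complex.I * ((u₁ n : ℝ):ℂ) / (a:ℂ) * (t:ℂ)))
        MeasureTheory.volume 0 a :=
      (Complex.continuous_exp.comp (continuous_const.mul Complex.continuous_ofReal)).intervalIntegrable _ _
    have hc1 : Complex.I * ((u₁ n : ℝ):ℂ) / (a:ℂ) ≠ 0 :=
      div_ne_zero (mul_ne_zero Complex.I_ne_zero (hu1C n)) haC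
    have hc2 : Complex.I * ((u₂ n : ℝ):ℂ) / (a:ℂ) ≠ 0 :=
      div_ne_zero (mul_ne_zero Complex.I_ne_zero (hu2C n)) haC
    rw [intervalIntegral.integral_div, intervalIntegral.integral_mul_const,
      intervalIntegral.integral_sub int1 int2,
      integral_exp_mul_complex hc2, integral_exp_mul_complex hc1,
      key_exp (u₁ n) ((r:ℤ) - n) (by simp only [hu1_def]; push_cast; ring),
      key_exp (u₂ n) (-(r:ℤ) - n) (by simp only [hu2_def]; push_cast; ring),
      hdu n]
    simp only [Complex.ofReal_zero, mul_zero, Complex.exp_zero, hK_def]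
    rw [Complex.real_smul, Complex.ofReal_div, Complex.ofReal_one]
    exact coeff_alg (a:ℂ) _ ((u₁ n : ℝ):ℂ) ((u₂ n : ℝ):ℂ) (Real.pi:ℂ) (r:ℂ) haC (hu1C n) (hu2C n)
      (by simp only [hu1_def, hu2_def]; push_cast; ring)
  -- summability of coefficients
  have hcsum : Summable (fourierCoeff (⇑F)) := by
    refine Summable.of_norm ?_
    refine Summable.congr (hdsum.mul_left ‖K‖) fun n => ?_
    rw [hcoeff n, norm_div, Complex.norm_real (d n), Real.norm_eq_abs, mul_one_div]
  -- pointwise Fourier expansion at x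
  have HS := has_pointwise_sum_fourier_series_of_summable hcsum (x : AddCircle a)
  have hFx : F ((x : ℝ) : AddCircle a) = g x := by
    have : (⇑F) = AddCircle.liftIco a 0 g := rfl
    rw [this]
    exact AddCircle.liftIco_coe_apply (by simp [hx0.le, hxa] : x ∈ Set.Ico 0 (0 + a))
  have HS2 : HasSum (fun n : ℤ => K *
      (Complex.exp (Complex.I * (2 * Real.pi * n * x / a)) / ((d n : ℝ) : ℂ))) (g x) := by
    rw [← hFx]
    refine HS.congr_fun fun n => ?_
    rw [hcoeff n, fourier_coe_apply, smul_eq_mul]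
    rw [show (2 : ℂ) * (Real.pi:ℂ) * Complex.I * (n:ℂ) * (x:ℂ) / (a:ℂ)
        = Complex.I * (2 * (Real.pi:ℂ) * (n:ℂ) * (x:ℂ) / (a:ℂ)) by ring]
    ring
  have hgx : K * (∑' n : ℤ,
      Complex.exp (Complex.I * (2 * Real.pi * n * x / a)) / ((d n : ℝ) : ℂ))
      = Complex.exp (-Complex.I * (σ * x / a)) * ((Real.sin (2 * Real.pi * r * x / a) : ℝ) : ℂ) := by
    rw [← tsum_mul_left, HS2.tsum_eq]
  -- final algebra
  set T : ℂ := ∑' n : ℤ,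
      Complex.exp (Complex.I * (2 * Real.pi * n * x / a)) / ((d n : ℝ) : ℂ) with hT_def
  have f3 : Complex.exp (Complex.I * ((σ:ℂ) * x / a)) * Complex.exp (-Complex.I * ((σ:ℂ) * x / a)) = 1 := by
    rw [← Complex.exp_add]
    simp only [show Complex.I * ((σ:ℂ) * x / a) + -Complex.I * ((σ:ℂ) * x / a) = 0 by ring,
      Complex.exp_zero]
  have KK : (-4) * (Real.pi:ℂ) * Complex.I * (r:ℂ) * Complex.exp (-Complex.I * ((σ:ℂ) / 2)) *
      ((Real.sin (σ / 2) : ℝ) : ℂ) = K := by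
    rw [Complex.ofReal_sin, Complex.sin, hK_def]
    have q1 : Complex.exp (-Complex.I * ((σ:ℂ)/2)) * Complex.exp (-(((σ/2 : ℝ):ℂ)) * Complex.I)
        = Complex.exp (-Complex.I * σ) := by
      rw [← Complex.exp_add]; congr 1; push_cast; ring
    have q2 : Complex.exp (-Complex.I * ((σ:ℂ)/2)) * Complex.exp ((((σ/2 : ℝ):ℂ)) * Complex.I)
        = 1 := by
      rw [← Complex.exp_add,
        show -Complex.I * ((σ:ℂ)/2) + (((σ/2 : ℝ):ℂ)) * Complex.I = 0 by push_cast; ring,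
        Complex.exp_zero]
    have hI := Complex.I_sq
    linear_combination (-4) * (Real.pi:ℂ) * Complex.I * (r:ℂ) * Complex.I / 2 * q1
      + 4 * (Real.pi:ℂ) * Complex.I * (r:ℂ) * Complex.I / 2 * q2
      + (2 * (Real.pi:ℂ) * (r:ℂ) * (1 - Complex.exp (-Complex.I * (σ:ℂ)))) * hI
  have hsin_arg : 2 * (r:ℝ) * Real.pi * x / a = 2 * Real.pi * r * x / a := by ring
  rw [hsin_arg, Complex.ofReal_mul]
  linear_combination (-((Real.sqrt (2/a) : ℂ)) * T * Complex.exp (Complex.I * ((σ:ℂ) * x / a))) * KK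
    - ((Real.sqrt (2/a) : ℂ)) * Complex.exp (Complex.I * ((σ:ℂ) * x / a)) * hgx
    - ((Real.sqrt (2/a) : ℂ)) * ((Real.sin (2 * Real.pi * r * x / a) : ℝ) : ℂ) * f3
end

section
/- For odd N = 2r+1 and σ = 0, the expansion √(2/a)sin((2r+1)πx/a) = -2π(2r+1)√(2/a)·Σ_{n=-∞}^{∞} e^{i2πnx/a}/(4π²n² - π²(2r+1)²) holds for all x ∈ (0,a). -/
open Real Complex

set_option maxHeartbeats 1000000

/-- momentum (σ = 0) expansion of the odd stationary state
ψ_{2r+1} as a convergent series over ℤ. -/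
theorem momentum_expansion_odd
    (a : ℝ) (ha : 0 < a) (r : ℕ) (x : ℝ) (hx : x ∈ Set.Ioo 0 a) :
    Summable (fun n : ℤ =>
      Complex.exp (Complex.I * (2 * Real.pi * n * x / a)) /
        ((4 * Real.pi ^ 2 * (n : ℝ) ^ 2 -
            Real.pi ^ 2 * ((2 * r + 1 : ℕ) : ℝ) ^ 2 : ℝ) : ℂ)) ∧
    ((Real.sqrt (2 / a) * Real.sin ((2 * r + 1) * Real.pi * x / a) : ℝ) : ℂ)
      = ((-2 * Real.pi * (2 * r + 1) * Real.sqrt (2 / a) : ℝ) : ℂ) *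
          ∑' n : ℤ,
            Complex.exp (Complex.I * (2 * Real.pi * n * x / a)) /
              ((4 * Real.pi ^ 2 * (n : ℝ) ^ 2 -
                  Real.pi ^ 2 * ((2 * r + 1 : ℕ) : ℝ) ^ 2 : ℝ) : ℂ) := by
  haveI : Fact (0 < a) := ⟨ha⟩
  have hπ := Real.pi_pos
  have ha' : (a : ℝ) ≠ 0 := ha.ne'
  set N : ℝ := ((2 * r + 1 : ℕ) : ℝ) with hNdef
  have hNval : N = 2 * (r : ℝ) + 1 := by rw [hNdef]; push_cast; ring
  have hNpos : 0 < N := by rw [hNval]; positivity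
  -- nonvanishing of denominators
  have hm1' : ∀ n : ℤ, (N + 2 * (n:ℝ)) ≠ 0 := by
    intro n h
    have : (2 * (r:ℤ) + 1) + 2 * n = 0 := by
      have := hNval ▸ h
      exact_mod_cast this
    omega
  have hm2' : ∀ n : ℤ, (N - 2 * (n:ℝ)) ≠ 0 := by
    intro n h
    have : (2 * (r:ℤ) + 1) - 2 * n = 0 := by
      have := hNval ▸ h
      exact_mod_cast this
    omega
  have hD : ∀ n : ℤ,
      ((4 * Real.pi ^ 2 * (n : ℝ) ^ 2 - Real.pi ^ 2 * N ^ 2) : ℝ) ≠ 0 := by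
    intro n
    have heq : (4 * Real.pi ^ 2 * (n : ℝ) ^ 2 - Real.pi ^ 2 * N ^ 2)
        = -(Real.pi ^ 2 * ((N + 2 * n) * (N - 2 * n))) := by ring
    rw [heq, neg_ne_zero]
    exact mul_ne_zero (by positivity) (mul_ne_zero (hm1' n) (hm2' n))
  -- the function
  set f : ℝ → ℂ := fun t => ((Real.sin ((2 * r + 1) * Real.pi * t / a) : ℝ) : ℂ) with hf
  have hfa : f 0 = f a := by
    have h1 : ((2 * (r:ℝ) + 1) * Real.pi * a / a) = ((2 * r + 1 : ℕ) : ℝ) * Real.pi := by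
      push_cast; field_simp
    simp only [hf, mul_zero, zero_div, Real.sin_zero, h1, Real.sin_nat_mul_pi,
      Complex.ofReal_zero]
  have hfc : Continuous f := by fun_prop
  set F : C(AddCircle a, ℂ) :=
    ⟨AddCircle.liftIco a 0 f,
      AddCircle.liftIco_zero_continuous hfa hfc.continuousOn⟩ with hF
  -- exp of odd multiples of πI
  have hexpodd : ∀ m : ℤ, Odd m → Complex.exp ((m : ℂ) * (↑Real.pi * Complex.I)) = -1 := by
    intro m hm
    rw [Complex.exp_int_mul, Complex.exp_pi_mul_I, hm.neg_one_zpow]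
  -- coefficients
  have hcoeff : ∀ n : ℤ, fourierCoeff (⇑F) n
      = (((-2 * Real.pi * N) /
          (4 * Real.pi ^ 2 * (n : ℝ) ^ 2 - Real.pi ^ 2 * N ^ 2) : ℝ) : ℂ) := by
    intro n
    have hp : ∀ t ∈ Set.uIcc (0:ℝ) (0 + a),
        (fourier (-n) (↑t : AddCircle a)) • (⇑F) ↑t
          = (fourier (-n) (↑t : AddCircle a)) • f t := by
      intro t ht
      rw [Set.uIcc_of_le (by linarith), zero_add] at ht
      rcases lt_or_eq_of_le ht.2 with h | h
      · rw [hF]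
        simp only [ContinuousMap.coe_mk]
        rw [AddCircle.liftIco_zero_coe_apply ⟨ht.1, h⟩]
      · subst h
        have hcast : ((t : ℝ) : AddCircle t) = ((0 : ℝ) : AddCircle t) := by
          simp
        rw [hF]
        simp only [ContinuousMap.coe_mk]
        rw [hcast, AddCircle.liftIco_zero_coe_apply ⟨le_refl _, ha⟩, hfa]
    rw [fourierCoeff_eq_intervalIntegral (⇑F) n 0, intervalIntegral.integral_congr hp]
    -- now compute the integral
    set c₁ : ℂ := -(Complex.I * Real.pi * (N + 2 * n) / a) with hc1
    set c₂ : ℂ := Complex.I * Real.pi * (N - 2 * n) / a with hc2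
    have hπc : (Real.pi : ℂ) ≠ 0 := Complex.ofReal_ne_zero.mpr hπ.ne'
    have hac : (a : ℂ) ≠ 0 := Complex.ofReal_ne_zero.mpr ha'
    have hm1c : ((N : ℂ) + 2 * n) ≠ 0 := by
      have := hm1' n
      intro h
      apply this
      exact_mod_cast h
    have hm2c : ((N : ℂ) - 2 * n) ≠ 0 := by
      have := hm2' n
      intro h
      apply this
      exact_mod_cast h
    have hc1ne : c₁ ≠ 0 := by
      rw [hc1]
      simp only [neg_ne_zero, div_ne_zero_iff]
      exact ⟨mul_ne_zero (mul_ne_zero Complex.I_ne_zero hπc) hm1c, hac⟩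
    have hc2ne : c₂ ≠ 0 := by
      rw [hc2]
      simp only [div_ne_zero_iff]
      exact ⟨mul_ne_zero (mul_ne_zero Complex.I_ne_zero hπc) hm2c, hac⟩
    have hint : ∀ t : ℝ, (fourier (-n) (↑t : AddCircle a)) • f t
        = Complex.I / 2 * Complex.exp (c₁ * t) - Complex.I / 2 * Complex.exp (c₂ * t) := by
      intro t
      rw [smul_eq_mul, fourier_coe_apply, hf]
      simp only
      rw [Complex.ofReal_sin, Complex.sin]
      have e1 : 2 * (Real.pi:ℂ) * Complex.I * ((-n : ℤ) : ℂ) * t / a +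
          -((((2 * (r:ℕ) + 1) * Real.pi * t / a : ℝ) : ℂ)) * Complex.I = c₁ * t := by
        rw [hc1, hNval]
        push_cast
        field_simp
        ring
      have e2 : 2 * (Real.pi:ℂ) * Complex.I * ((-n : ℤ) : ℂ) * t / a +
          (((2 * (r:ℕ) + 1) * Real.pi * t / a : ℝ) : ℂ) * Complex.I = c₂ * t := by
        rw [hc2, hNval]
        push_cast
        field_simp
        ring
      rw [← e1, ← e2, Complex.exp_add, Complex.exp_add]
      push_cast
      ring
    rw [intervalIntegral.integral_congr (fun t _ => hint t)]
    rw [intervalIntegral.integral_sub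
      ((Continuous.intervalIntegrable (by fun_prop) _ _ :
        IntervalIntegrable (fun t : ℝ => Complex.I / 2 * Complex.exp (c₁ * t)) _ _ _))
      ((Continuous.intervalIntegrable (by fun_prop) _ _ :
        IntervalIntegrable (fun t : ℝ => Complex.I / 2 * Complex.exp (c₂ * t)) _ _ _)),
      intervalIntegral.integral_const_mul, intervalIntegral.integral_const_mul,
      integral_exp_mul_complex hc1ne, integral_exp_mul_complex hc2ne]
    have h1 : Complex.exp (c₁ * (((0:ℝ) + a : ℝ) : ℂ)) = -1 := by
      have heq : c₁ * (((0:ℝ) + a : ℝ) : ℂ)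
          = ((-(2 * (r:ℤ) + 1 + 2 * n) : ℤ) : ℂ) * (↑Real.pi * Complex.I) := by
        rw [hc1, hNval]
        push_cast
        field_simp
        ring
      rw [heq, hexpodd _ ⟨-((r:ℤ) + n) - 1, by ring⟩]
    have h2 : Complex.exp (c₂ * (((0:ℝ) + a : ℝ) : ℂ)) = -1 := by
      have heq : c₂ * (((0:ℝ) + a : ℝ) : ℂ)
          = (((2 * (r:ℤ) + 1 - 2 * n) : ℤ) : ℂ) * (↑Real.pi * Complex.I) := by
        rw [hc2, hNval]
        push_cast
        field_simp
        ring
      rw [heq, hexpodd _ ⟨(r:ℤ) - n, by ring⟩]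
    rw [h1, h2]
    simp only [Complex.ofReal_zero, mul_zero, Complex.exp_zero, zero_add]
    rw [Complex.real_smul, hc1, hc2]
    have hDc : (4 * (Real.pi:ℂ) ^ 2 * (n : ℂ) ^ 2 - (Real.pi:ℂ) ^ 2 * (N:ℂ) ^ 2) ≠ 0 := by
      intro h
      apply hD n
      exact_mod_cast h
    push_cast
    rw [eq_div_iff hDc]
    rw [show ((-1 - 1 : ℂ) / -(Complex.I * (Real.pi:ℂ) * ((N:ℂ) + 2 * (n:ℂ)) / (a:ℂ)))
        = -(2 * (a:ℂ) * Complex.I) / ((Real.pi:ℂ) * ((N:ℂ) + 2 * (n:ℂ))) by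
      rw [div_eq_div_iff (hc1 ▸ hc1ne) (mul_ne_zero hπc hm1c)]
      field_simp
      ring_nf
      simp [Complex.I_sq]]
    rw [show ((-1 - 1 : ℂ) / (Complex.I * (Real.pi:ℂ) * ((N:ℂ) - 2 * (n:ℂ)) / (a:ℂ)))
        = (2 * (a:ℂ) * Complex.I) / ((Real.pi:ℂ) * ((N:ℂ) - 2 * (n:ℂ))) by
      rw [div_eq_div_iff (hc2 ▸ hc2ne) (mul_ne_zero hπc hm2c)]
      field_simp
      ring_nf
      simp [Complex.I_sq]]
    have hQ : ((a:ℂ) * (Real.pi:ℂ) ^ 2 * (N:ℂ) ^ 2 * 4 - (a:ℂ) * (Real.pi:ℂ) ^ 2 * (n:ℂ) ^ 2 * 16) ≠ 0 := by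
      have heq2 : ((a:ℂ) * (Real.pi:ℂ) ^ 2 * (N:ℂ) ^ 2 * 4 - (a:ℂ) * (Real.pi:ℂ) ^ 2 * (n:ℂ) ^ 2 * 16)
          = (-4 * (a:ℂ)) * (4 * (Real.pi:ℂ) ^ 2 * (n:ℂ) ^ 2 - (Real.pi:ℂ) ^ 2 * (N:ℂ) ^ 2) := by
        ring
      rw [heq2]
      exact mul_ne_zero (by simpa using hac) hDc
    field_simp
    ring_nf
    simp only [Complex.I_sq]
    field_simp [hQ]
    ring
  -- summability of the Fourier coefficients
  have hsum : Summable (fourierCoeff (⇑F)) := by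
    apply Summable.of_norm_bounded_eventually (g := fun n : ℤ => N * (1 / (n : ℝ) ^ 2))
      (((summable_one_div_int_pow (p := 2)).mpr one_lt_two).mul_left N)
    rw [Filter.eventually_cofinite]
    apply Set.Finite.subset (Set.finite_Icc (-(2 * (r:ℤ) + 1)) (2 * (r:ℤ) + 1))
    intro n hn
    by_contra hmem
    apply hn
    simp only [Set.mem_Icc, not_and_or, not_le] at hmem
    have hint : (2 * (r:ℤ) + 1) ^ 2 ≤ n ^ 2 := by
      rcases hmem with h | h
      · nlinarith
      · nlinarith
    have hn2 : N ^ 2 ≤ (n : ℝ) ^ 2 := by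
      rw [hNval]
      calc (2 * (r:ℝ) + 1) ^ 2 = (((2 * (r:ℤ) + 1) ^ 2 : ℤ) : ℝ) := by push_cast; ring
        _ ≤ ((n ^ 2 : ℤ) : ℝ) := by exact_mod_cast hint
        _ = (n : ℝ) ^ 2 := by push_cast; ring
    have hnne : (n : ℝ) ≠ 0 := by
      have : n ≠ 0 := by rcases hmem with h | h <;> omega
      exact_mod_cast this
    have hnsq : 0 < (n : ℝ) ^ 2 := by positivity
    rw [hcoeff n, Complex.norm_real, Real.norm_eq_abs, abs_div]
    have hπ2 : 0 < Real.pi ^ 2 := by positivity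
    have hDpos : 0 < 4 * Real.pi ^ 2 * (n : ℝ) ^ 2 - Real.pi ^ 2 * N ^ 2 := by
      nlinarith [mul_nonneg hπ2.le (sub_nonneg.mpr hn2), mul_pos hπ2 (mul_pos hNpos hNpos)]
    have hnum : (-2 * Real.pi * N : ℝ) < 0 := by
      have : 0 < 2 * Real.pi * N := by positivity
      linarith
    rw [abs_of_pos hDpos, abs_of_neg hnum]
    rw [div_le_iff₀ hDpos]
    have h3 : 3 < Real.pi := Real.pi_gt_three
    have hbd : 3 * Real.pi ^ 2 * (n : ℝ) ^ 2 ≤ 4 * Real.pi ^ 2 * (n : ℝ) ^ 2 - Real.pi ^ 2 * N ^ 2 := by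
      nlinarith
    calc -(-2 * Real.pi * N) = 2 * Real.pi * N := by ring
      _ = (N * (1 / (n : ℝ) ^ 2)) * (2 * Real.pi * (n : ℝ) ^ 2) := by
          field_simp
      _ ≤ (N * (1 / (n : ℝ) ^ 2)) * (4 * Real.pi ^ 2 * (n : ℝ) ^ 2 - Real.pi ^ 2 * N ^ 2) := by
          apply mul_le_mul_of_nonneg_left _ (by positivity)
          nlinarith
  -- pointwise convergence of the Fourier series
  have hps := has_pointwise_sum_fourier_series_of_summable hsum (↑x : AddCircle a)
  have hFx : F (↑x : AddCircle a) = f x := by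
    rw [hF]
    simp only [ContinuousMap.coe_mk]
    exact AddCircle.liftIco_zero_coe_apply ⟨hx.1.le, hx.2⟩
  rw [hFx] at hps
  have hfun : (fun n : ℤ => fourierCoeff (⇑F) n • fourier n (↑x : AddCircle a))
      = fun n : ℤ => (((-2 * Real.pi * N : ℝ)) : ℂ) *
        (Complex.exp (Complex.I * (2 * Real.pi * n * x / a)) /
          ((4 * Real.pi ^ 2 * (n : ℝ) ^ 2 - Real.pi ^ 2 * N ^ 2 : ℝ) : ℂ)) := by
    funext n
    rw [hcoeff n, smul_eq_mul, fourier_coe_apply]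
    rw [show 2 * (Real.pi : ℂ) * Complex.I * (n : ℂ) * (x : ℂ) / (a : ℂ)
        = Complex.I * (2 * (Real.pi : ℂ) * (n : ℂ) * (x : ℂ) / (a : ℂ)) by ring]
    push_cast
    ring
  rw [hfun] at hps
  have hC : (((-2 * Real.pi * N : ℝ)) : ℂ) ≠ 0 := by
    rw [Complex.ofReal_ne_zero]
    have : 0 < 2 * Real.pi * N := by positivity
    intro h
    linarith
  have hs2 : HasSum (fun n : ℤ => Complex.exp (Complex.I * (2 * Real.pi * n * x / a)) /
      ((4 * Real.pi ^ 2 * (n : ℝ) ^ 2 - Real.pi ^ 2 * N ^ 2 : ℝ) : ℂ))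
      (f x / (((-2 * Real.pi * N : ℝ)) : ℂ)) := by
    have h := hps.div_const ((((-2 * Real.pi * N : ℝ)) : ℂ))
    simpa only [mul_div_cancel_left₀ _ hC] using h
  refine ⟨hs2.summable, ?_⟩
  rw [hs2.tsum_eq, hf]
  simp only
  have hrne : (2 * (r : ℂ) + 1) ≠ 0 := by
    have : (0:ℝ) < 2 * (r : ℝ) + 1 := by positivity
    intro h
    have : (2 * (r : ℝ) + 1) = 0 := by exact_mod_cast h
    linarith
  have hπc' : (Real.pi : ℂ) ≠ 0 := Complex.ofReal_ne_zero.mpr hπ.ne'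
  rw [hNval] at hC ⊢
  rw [Complex.ofReal_mul, Complex.ofReal_mul,
    mul_comm (((-2 * Real.pi * (2 * (r:ℝ) + 1) : ℝ)) : ℂ) (((Real.sqrt (2/a) : ℝ)) : ℂ),
    mul_assoc (((Real.sqrt (2/a) : ℝ)) : ℂ) (((-2 * Real.pi * (2 * (r:ℝ) + 1) : ℝ)) : ℂ)
      ((((Real.sin ((2 * (r:ℝ) + 1) * Real.pi * x / a) : ℝ)) : ℂ) /
        (((-2 * Real.pi * (2 * (r:ℝ) + 1) : ℝ)) : ℂ)),
    mul_comm (((-2 * Real.pi * (2 * (r:ℝ) + 1) : ℝ)) : ℂ)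
      ((((Real.sin ((2 * (r:ℝ) + 1) * Real.pi * x / a) : ℝ)) : ℂ) /
        (((-2 * Real.pi * (2 * (r:ℝ) + 1) : ℝ)) : ℂ)),
    div_mul_cancel₀ _ hC]
end
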